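/- Let f : ℝ^d → Mₙ(ℂ) be a map into the n×n complex matrices such that f is differentiable at 0, f(0) = 1, and for every v ∈ ℝ^d and all s, t ∈ ℝ one has f((s+t)·v) = f(s·v) · f(t·v). Then there exists a real-linear map M : ℝ^d → Mₙ(ℂ) such that f(x) = exp(M(x)) for all x ∈ ℝ^d, where exp is the matrix exponential. -/

import Mathlib

open NormedSpace

set_option maxHeartbeats 1000000
set_option synthInstance.maxHeartbeats 400000

lemma core' {A' : Type*} [NormedRing A'] [NormedAlgebra ℝ A'] [CompleteSpace A']
    (g : ℝ → A') (A : A') (h0 : g 0 = 1)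
    (hadd : ∀ s t : ℝ, g (s + t) = g s * g t)
    (hd : HasDerivAt g A 0) : ∀ t, g t = exp (t • A) := by

  have hg : ∀ t, HasDerivAt g (A * g t) t := by
    intro t
    have h1 : HasDerivAt (fun s : ℝ => g (s - t)) ((1 : ℝ) • A) t := by
      have hsub : HasDerivAt (fun s : ℝ => s - t) (1 : ℝ) t := (hasDerivAt_id t).sub_const t
      have : (t - t) = (0 : ℝ) := by ring
      exact HasDerivAt.scomp t (this ▸ hd) hsub
    have h2 := h1.mul_const (g t)
    have heq : ∀ s : ℝ, g (s - t) * g t = g s := fun s => by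
      rw [← hadd]; ring_nf
    have : HasDerivAt g ((1 : ℝ) • A * g t) t := by
      refine h2.congr_of_eventuallyEq (Filter.Eventually.of_forall fun s => (heq s).symm)
    simpa using this
  set e : ℝ → A' := fun t => exp (t • (-A)) with he_def
  have he : ∀ t, HasDerivAt e (e t * (-A)) t := fun t => hasDerivAt_exp_smul_const (-A) t
  have hu : ∀ t, HasDerivAt (fun t => e t * g t) 0 t := by
    intro t
    have h := (he t).mul (hg t)
    have : e t * -A * g t + e t * (A * g t) = 0 := by
      simp [mul_assoc, mul_neg, neg_mul]
    exact this ▸ h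
  have hconst : ∀ t, e t * g t = 1 := by
    intro t
    have h := is_const_of_deriv_eq_zero (f := fun t => e t * g t)
      (fun s => (hu s).differentiableAt) (fun s => (hu s).deriv) t 0
    simpa [he_def, h0] using h
  intro t
  have hinv : exp (t • A) * e t = 1 := by
    rw [he_def]
    have hc : Commute (t • A) (t • (-A)) := by
      rw [smul_neg]; exact (Commute.refl (t • A)).neg_right
    rw [← exp_add_of_commute_of_mem_ball (𝕂 := ℝ) hc
      ((expSeries_radius_eq_top ℝ A').symm ▸ edist_lt_top _ _)
      ((expSeries_radius_eq_top ℝ A').symm ▸ edist_lt_top _ _)]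
    simp
  calc g t = (exp (t • A) * e t) * g t := by rw [hinv, one_mul]
    _ = exp (t • A) * (e t * g t) := by rw [mul_assoc]
    _ = exp (t • A) := by rw [hconst, mul_one]


attribute [local instance] Matrix.normedAddCommGroup Matrix.normedSpace

/-- If `f : ℝ^d → Mₙ(ℂ)` is differentiable at `0`, satisfies `f 0 = 1`, and sends
every one-parameter subgroup of `(ℝ^d,+)` to a one-parameter subgroup of matrices
(`f((s+t)•v) = f(s•v) * f(t•v)`), then there is a real-linear map
`M : ℝ^d → Mₙ(ℂ)` with `f x = exp (M x)` for all `x`. -/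
theorem OPS_homomorphism_eq_exp_of_linear (d n : ℕ)
    (f : (Fin d → ℝ) → Matrix (Fin n) (Fin n) ℂ)
    (hdiff : DifferentiableAt ℝ f 0)
    (hone : f 0 = 1)
    (hops : ∀ (v : Fin d → ℝ) (s t : ℝ), f ((s + t) • v) = f (s • v) * f (t • v)) :
    ∃ M : (Fin d → ℝ) →ₗ[ℝ] Matrix (Fin n) (Fin n) ℂ,
      ∀ x, f x = exp (M x) := by
  set L := fderiv ℝ f 0 with hL
  refine ⟨(L : (Fin d → ℝ) →ₗ[ℝ] Matrix (Fin n) (Fin n) ℂ), fun x => ?_⟩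
  set φ := Matrix.toEuclideanCLM (𝕜 := ℂ) (n := Fin n) with hφ
  let ψlin : Matrix (Fin n) (Fin n) ℂ →ₗ[ℝ]
      (EuclideanSpace ℂ (Fin n) →L[ℂ] EuclideanSpace ℂ (Fin n)) :=
    { toFun := φ
      map_add' := fun a b => map_add φ a b
      map_smul' := fun r a => by
        show φ (r • a) = r • φ a
        rw [← algebraMap_smul ℂ r a, ← algebraMap_smul ℂ r (φ a), map_smul] }
  let ψ := LinearMap.toContinuousLinearMap ψlin
  let φAlg : Matrix (Fin n) (Fin n) ℂ →ₐ[ℝ]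
      (EuclideanSpace ℂ (Fin n) →L[ℂ] EuclideanSpace ℂ (Fin n)) :=
    AlgHom.mk' φ.toRingEquiv.toRingHom (fun c a => by
      show φ (c • a) = c • φ a
      rw [← algebraMap_smul ℂ c a, ← algebraMap_smul ℂ c (φ a), map_smul])
  set g : ℝ → Matrix (Fin n) (Fin n) ℂ := fun t => f (t • x) with hg
  have hd : HasDerivAt g (L x) 0 := by
    have h1 : HasDerivAt (fun t : ℝ => t • x) x 0 := by
      simpa using (hasDerivAt_id (0 : ℝ)).smul_const x
    have hF : HasFDerivAt f L ((fun t : ℝ => t • x) 0) := by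
      simpa using hdiff.hasFDerivAt
    exact hF.comp_hasDerivAt 0 h1
  have hGd : HasDerivAt (fun t => φ (g t)) (φ (L x)) 0 :=
    (ψ.hasFDerivAt.comp_hasDerivAt 0 hd : HasDerivAt (ψ ∘ g) (ψ (L x)) 0)
  have hG := core' (fun t => φ (g t)) (φ (L x))
    (by simp [hg, hone]) (fun s t => by
      rw [hg]
      show φ (f ((s + t) • x)) = _
      rw [hops x s t, map_mul]) hGd
  have h1 := hG 1
  rw [one_smul] at h1
  let ψinvlin : (EuclideanSpace ℂ (Fin n) →L[ℂ] EuclideanSpace ℂ (Fin n)) →ₗ[ℝ]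
      Matrix (Fin n) (Fin n) ℂ :=
    { toFun := φ.symm
      map_add' := fun a b => map_add φ.symm a b
      map_smul' := fun r a => by
        show φ.symm (r • a) = r • φ.symm a
        rw [← algebraMap_smul ℂ r a, ← algebraMap_smul ℂ r (φ.symm a), map_smul] }
  let ψinv := LinearMap.toContinuousLinearMap ψinvlin
  have hsum : HasSum (fun k : ℕ => (k.factorial⁻¹ : ℝ) • (L x) ^ k)
      (φ.symm (exp (φ (L x)))) := by
    have h := exp_series_hasSum_exp' (𝕂 := ℝ) (φ (L x))
    have h2 := h.mapL ψinv
    have heq : ∀ k : ℕ, ψinv ((k.factorial⁻¹ : ℝ) • (φ (L x)) ^ k)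
        = (k.factorial⁻¹ : ℝ) • (L x) ^ k := by
      intro k
      rw [map_smul]
      congr 1
      show φ.symm ((φ (L x)) ^ k) = (L x) ^ k
      rw [map_pow, StarAlgEquiv.symm_apply_apply]
    simp only [heq] at h2
    exact h2
  have hfx : φ (f x) = exp (φ (L x)) := by
    rw [← h1, hg]
    show φ (f x) = φ (f ((1 : ℝ) • x))
    rw [one_smul]
  have hfx2 : f x = φ.symm (exp (φ (L x))) := by
    rw [← hfx, StarAlgEquiv.symm_apply_apply]
  rw [hfx2, ← hsum.tsum_eq]
  rw [exp_eq_tsum (𝕂 := ℂ)]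
  exact tsum_congr fun k => inv_natCast_smul_eq ℝ ℂ _ _
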